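/- arXiv:1803.07804 — 4 statements merged into one kernel-verified Lean document; each statement's English description precedes it below -/
import Mathlib

section
/- For all integers N ≥ 1 and n ≥ 1, B_{N,n} = n! · ∑_{k=1}^{n} ∑_{i_1+⋯+i_k=n, i_1,…,i_k ≥ 1} (−N!)^k / ((N+i_1)! ⋯ (N+i_k)!), where the inner sum is over all compositions of n into k positive parts. -/
/-
Write `hgSeries N = 1 - g`, where `g` has zero constant term and `i`-th coefficient
`-N!/(N+i)!` for `i ≥ 1`. Then `(hgSeries N)⁻¹ = ∑ₖ gᵏ`, and since `gᵏ` is divisible by `Xᵏ`, only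
`k ≤ n` contribute to the `n`-th coefficient. The `n`-th coefficient of `gᵏ` is the sum, over the
compositions `i₁ + ⋯ + iₖ = n` into positive parts, of `∏ⱼ (-N!/(N+iⱼ)!)`; the term `k = 0`
vanishes because `n ≥ 1`.
-/

/-- The power series ∑_{i≥0} (N!/(N+i)!) xⁱ over ℚ. -/
noncomputable def hgSeries (N : ℕ) : PowerSeries ℚ :=
  PowerSeries.mk fun i => (N.factorial : ℚ) / ((N + i).factorial : ℚ)

/-- The hypergeometric Bernoulli number `B_{N,n}`, defined so that
`∑ (B_{N,n}/n!) xⁿ` is the multiplicative inverse of `hgSeries N` in ℚ[[x]]. -/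
noncomputable def hB (N n : ℕ) : ℚ :=
  (n.factorial : ℚ) * PowerSeries.coeff (R := ℚ) n (hgSeries N)⁻¹

open Finset

namespace PowerSeries

theorem coeff_pow_eq_sum_antidiagonalTuple {R : Type*} [CommSemiring R] (k n : ℕ) (φ : R⟦X⟧) :
    coeff n (φ ^ k) = ∑ l ∈ Nat.antidiagonalTuple k n, ∏ j, coeff (l j) φ := by
  classical
  rw [← Fin.prod_const, coeff_prod, finsuppAntidiag, sum_map,
    ← piAntidiag_univ_fin_eq_antidiagonalTuple]
  exact sum_attach (piAntidiag univ n) fun l => ∏ j, coeff (l j) φ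

theorem coeff_pow_eq_sum_compositions {R : Type*} [CommSemiring R] {φ : R⟦X⟧}
    (hφ : constantCoeff φ = 0) (k n : ℕ) :
    coeff n (φ ^ k) = ∑ l ∈ (Nat.antidiagonalTuple k n).filter (fun l => ∀ j, 1 ≤ l j),
      ∏ j, coeff (l j) φ := by
  rw [coeff_pow_eq_sum_antidiagonalTuple, sum_filter_of_ne]
  intro l _ hl j
  by_contra! hj
  exact hl (prod_eq_zero (mem_univ j) (by simpa [Nat.lt_one_iff.mp hj] using hφ))

theorem coeff_inv_one_sub_eq_sum_coeff_pow {K : Type*} [Field K] {g : K⟦X⟧}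
    (hg : constantCoeff g = 0) (n : ℕ) :
    coeff n (1 - g)⁻¹ = ∑ i ∈ range (n + 1), coeff n (g ^ i) := by
  have hunit : constantCoeff (1 - g) ≠ 0 := by simp [hg]
  have hsplit : (1 - g)⁻¹ = ∑ i ∈ range (n + 1), g ^ i + (1 - g)⁻¹ * g ^ (n + 1) := by
    calc (1 - g)⁻¹ = (1 - g)⁻¹ * ((1 - g) * ∑ i ∈ range (n + 1), g ^ i + g ^ (n + 1)) := by
          rw [mul_neg_geom_sum, sub_add_cancel, mul_one]
      _ = _ := by rw [mul_add, ← mul_assoc, PowerSeries.inv_mul_cancel _ hunit, one_mul]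
  have hdvd : X ^ (n + 1) ∣ (1 - g)⁻¹ * g ^ (n + 1) :=
    dvd_mul_of_dvd_right (pow_dvd_pow_of_dvd (X_dvd_iff.mpr hg) _) _
  rw [hsplit, map_add, map_sum, X_pow_dvd_iff.mp hdvd n (Nat.lt_succ_self n), add_zero]

end PowerSeries

open PowerSeries

theorem constantCoeff_one_sub_hgSeries (N : ℕ) : constantCoeff (1 - hgSeries N) = 0 := by
  rw [map_sub, map_one, ← coeff_zero_eq_constantCoeff_apply]
  simp [hgSeries, N.factorial_ne_zero]

theorem coeff_one_sub_hgSeries (N : ℕ) {i : ℕ} (hi : i ≠ 0) :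
    coeff i (1 - hgSeries N) = -(N.factorial : ℚ) / ((N + i).factorial : ℚ) := by
  simp [hgSeries, hi, neg_div]

theorem coeff_pow_one_sub_hgSeries (N k n : ℕ) :
    coeff n ((1 - hgSeries N) ^ k) =
      ∑ i ∈ (Nat.antidiagonalTuple k n).filter (fun i => ∀ j, 1 ≤ i j),
        (-(N.factorial : ℚ)) ^ k / ∏ j, ((N + i j).factorial : ℚ) := by
  rw [coeff_pow_eq_sum_compositions (constantCoeff_one_sub_hgSeries N)]
  refine sum_congr rfl fun i hi => ?_
  have hpos : ∀ j, i j ≠ 0 := fun j => Nat.one_le_iff_ne_zero.mp ((mem_filter.mp hi).2 j)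
  simp only [coeff_one_sub_hgSeries N (hpos _), prod_div_distrib, prod_const, card_univ,
    Fintype.card_fin]

theorem stmt1_general (N n : ℕ) (hn : 1 ≤ n) :
    hB N n = (n.factorial : ℚ) * ∑ k ∈ Finset.Icc 1 n,
      ∑ i ∈ (Finset.Nat.antidiagonalTuple k n).filter (fun i => ∀ j, 1 ≤ i j),
        (-(N.factorial : ℚ)) ^ k / ∏ j, ((N + i j).factorial : ℚ) := by
  have hk0 : coeff n ((1 - hgSeries N) ^ 0) = 0 := by simp [Nat.one_le_iff_ne_zero.mp hn]
  rw [hB, ← sub_sub_cancel 1 (hgSeries N),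
    coeff_inv_one_sub_eq_sum_coeff_pow (constantCoeff_one_sub_hgSeries N),
    Nat.range_succ_eq_Icc_zero, ← insert_Icc_add_one_left_eq_Icc n.zero_le,
    sum_insert (by simp), hk0, zero_add, zero_add]
  exact congrArg _ (sum_congr rfl fun k _ => coeff_pow_one_sub_hgSeries N k n)

theorem stmt1 (N n : ℕ) (hN : 1 ≤ N) (hn : 1 ≤ n) :
    hB N n = (n.factorial : ℚ) * ∑ k ∈ Finset.Icc 1 n,
      ∑ i ∈ (Finset.Nat.antidiagonalTuple k n).filter (fun i => ∀ j, 1 ≤ i j),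
        (-(N.factorial : ℚ)) ^ k / ∏ j, ((N + i j).factorial : ℚ) :=
  stmt1_general N n hn
end

section
/- For all integers N ≥ 1 and n ≥ 1, B_{N,n} = (−1)^n · n! · det(A), where A is the n×n matrix with entries A_{i,j} = N!/(N+i−j+1)! for 1 ≤ j ≤ i ≤ n, A_{i,i+1} = 1 for 1 ≤ i ≤ n−1, and A_{i,j} = 0 for j > i+1. -/
/-!
The coefficients `gₖ` of `g = f⁻¹` solve the triangular Toeplitz system `T g = e₀`, where
`T i j = a (i - j)` for `j ≤ i` with `a k` the coefficients of `f`; since `a 0 = 1`, `det T = 1`.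
By Cramer's rule `gₙ` is the determinant of `T` with its last column replaced by `e₀`, and
Laplace expansion along that column leaves `(-1)ⁿ` times the minor without the first row and the
last column. That minor is the Hessenberg matrix of the theorem, with the `a 0 = 1` of `T` on its
superdiagonal.
-/

open Finset Matrix PowerSeries

namespace Matrix

variable {R : Type*} [CommRing R]

def lowerToeplitz (a : ℕ → R) (n : ℕ) : Matrix (Fin n) (Fin n) R :=
  of fun i j => if j ≤ i then a (i - j) else 0

theorem lowerToeplitz_isLowerTriangular (a : ℕ → R) (n : ℕ) :
    (lowerToeplitz a n).IsLowerTriangular := fun i j hij => by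
  simp [lowerToeplitz, not_le.mpr (show i < j from hij)]

theorem det_lowerToeplitz (a : ℕ → R) (n : ℕ) : (lowerToeplitz a n).det = a 0 ^ n := by
  rw [det_of_isLowerTriangular _ (lowerToeplitz_isLowerTriangular a n)]
  simp [lowerToeplitz]

def lowerHessenberg (a : ℕ → R) (n : ℕ) : Matrix (Fin n) (Fin n) R :=
  (lowerToeplitz a (n + 1)).submatrix Fin.succ Fin.castSucc

theorem det_updateCol_last_single_zero {n : ℕ} (A : Matrix (Fin (n + 1)) (Fin (n + 1)) R) :
    (A.updateCol (Fin.last n) (Pi.single 0 1)).det =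
      (-1) ^ n * (A.submatrix Fin.succ Fin.castSucc).det := by
  rw [det_succ_column _ (Fin.last n), Fintype.sum_eq_single 0]
  · simp only [Fin.succAbove_zero, Fin.succAbove_last, Fin.val_zero, Fin.val_last, zero_add,
      updateCol_self, Pi.single_eq_same, mul_one]
    congr 2
    ext i j
    simp [Fin.castSucc_ne_last]
  · intro i hi
    simp [hi]

theorem cramer_mulVec {ι : Type*} [Fintype ι] [DecidableEq ι] (A : Matrix ι ι R) (v : ι → R) :
    A.cramer (A *ᵥ v) = A.det • v := by
  rw [cramer_eq_adjugate_mulVec, mulVec_mulVec, adjugate_mul, smul_mulVec, one_mulVec]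

end Matrix

namespace PowerSeries

variable {R : Type*} [CommRing R]

theorem lowerToeplitz_coeff_mulVec_coeff {f g : R⟦X⟧} (hfg : f * g = 1) (n : ℕ) :
    lowerToeplitz (coeff · f) (n + 1) *ᵥ (fun j => coeff j g) = Pi.single 0 1 := by
  ext i
  have hcoeff := congrArg (coeff (i : ℕ)) (mul_comm f g ▸ hfg)
  rw [coeff_mul, Finset.Nat.sum_antidiagonal_eq_sum_range_succ_mk, coeff_one] at hcoeff
  have hrange : (range (n + 1)).filter (· ≤ (i : ℕ)) = range (i + 1) := by
    ext j
    simp only [mem_filter, mem_range]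
    omega
  simp only [mulVec, dotProduct, lowerToeplitz, of_apply, ite_mul, zero_mul, Fin.le_def]
  rw [Fin.sum_univ_eq_sum_range (fun j => if j ≤ (i : ℕ) then coeff (i - j) f * coeff j g else 0),
    ← sum_filter, hrange, Pi.single_apply]
  simp only [Fin.ext_iff, Fin.val_zero, ← hcoeff]
  exact sum_congr rfl fun j _ => mul_comm _ _

theorem coeff_eq_det_lowerHessenberg_of_mul_eq_one {f g : R⟦X⟧} (hf : constantCoeff f = 1)
    (hfg : f * g = 1) (n : ℕ) :
    coeff n g = (-1) ^ n * (lowerHessenberg (coeff · f) n).det := by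
  have hdet : (lowerToeplitz (coeff · f) (n + 1)).det = 1 := by
    rw [det_lowerToeplitz, coeff_zero_eq_constantCoeff_apply, hf, one_pow]
  have := congrFun (cramer_mulVec (lowerToeplitz (coeff · f) (n + 1)) fun j => coeff j g)
    (Fin.last n)
  rw [lowerToeplitz_coeff_mulVec_coeff hfg, cramer_apply, det_updateCol_last_single_zero, hdet,
    one_smul] at this
  exact this.symm

end PowerSeries

theorem constantCoeff_hgSeries (N : ℕ) : constantCoeff (hgSeries N) = 1 := by
  simp [hgSeries, ← coeff_zero_eq_constantCoeff_apply, N.factorial_ne_zero]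

theorem lowerHessenberg_coeff_hgSeries (N n : ℕ) :
    lowerHessenberg (coeff · (hgSeries N)) n =
      of fun i j : Fin n =>
        if (j : ℕ) = (i : ℕ) + 1 then (1 : ℚ)
        else if (j : ℕ) ≤ (i : ℕ) then
          (N.factorial : ℚ) / ((N + ((i : ℕ) - (j : ℕ)) + 1).factorial : ℚ)
        else 0 := by
  ext i j
  simp only [lowerHessenberg, lowerToeplitz, submatrix_apply, of_apply, Fin.le_def,
    Fin.val_succ, Fin.val_castSucc, hgSeries, coeff_mk]
  split_ifs with hle hsup hlt <;> try first | rfl | omega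
  · rw [hsup, Nat.sub_self, Nat.add_zero, div_self (by exact_mod_cast N.factorial_ne_zero)]
  · rw [Nat.sub_add_comm hlt, Nat.add_assoc]

/-- Rows and columns are indexed from `0`; the entries depend only on `i - j`, so this is the
paper's matrix. -/
theorem stmt7_general (N n : ℕ) :
    hB N n = (-1 : ℚ) ^ n * (n.factorial : ℚ) *
      (Matrix.of fun i j : Fin n =>
        if (j : ℕ) = (i : ℕ) + 1 then (1 : ℚ)
        else if (j : ℕ) ≤ (i : ℕ) then
          (N.factorial : ℚ) / ((N + ((i : ℕ) - (j : ℕ)) + 1).factorial : ℚ)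
        else 0).det := by
  have hinv : hgSeries N * (hgSeries N)⁻¹ = 1 :=
    PowerSeries.mul_inv_cancel _ (by simp [constantCoeff_hgSeries])
  rw [hB, coeff_eq_det_lowerHessenberg_of_mul_eq_one (constantCoeff_hgSeries N) hinv,
    lowerHessenberg_coeff_hgSeries]
  ring

/-- Determinant expression for `B_{N,n}`.  Here rows and columns are 0-indexed:
the (i,j) entry with j ≤ i is `N!/(N+i-j+1)!`, the superdiagonal entries are 1,
and all other entries are 0. -/
theorem stmt7 (N n : ℕ) (hN : 1 ≤ N) (hn : 1 ≤ n) :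
    hB N n = (-1 : ℚ) ^ n * (n.factorial : ℚ) *
      (Matrix.of fun i j : Fin n =>
        if (j : ℕ) = (i : ℕ) + 1 then (1 : ℚ)
        else if (j : ℕ) ≤ (i : ℕ) then
          (N.factorial : ℚ) / ((N + ((i : ℕ) - (j : ℕ)) + 1).factorial : ℚ)
        else 0).det :=
  stmt7_general N n
end

section
/- For every integer n ≥ 1, the classical Bernoulli number satisfies B_n = n! · ∑_{t_1 + 2t_2 + ⋯ + n t_n = n} ( (t_1+⋯+t_n)! / (t_1! ⋯ t_n!) ) · (−1)^{t_1+⋯+t_n} · (1/2!)^{t_1} (1/3!)^{t_2} ⋯ (1/(n+1)!)^{t_n}, where the sum is over all n-tuples (t_1,…,t_n) of nonnegative integers with t_1 + 2t_2 + ⋯ + n t_n = n. -/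
/-!
Write `x / (e^x - 1) = 1 / (1 - u)` with `u = -∑_{i ≥ 1} x^i / (i+1)!`. Since `u` has no constant
term, the coefficient of `x^n` in `1 / (1 - u)` is that of `∑_{k ≤ n} u^k`, and in each `u^k` the
series `u` may be truncated at degree `n`. The multinomial theorem then expands the coefficient of
`x^n` in `(∑_{i=1}^n c_i x^i)^k` as a sum over the tuples `t` with `∑ t_i = k` and `∑ i t_i = n`;
summing over `k` leaves exactly the tuples with `∑ i t_i = n`.
-/

open PowerSeries Finset
open scoped Nat

namespace PowerSeries

variable {R : Type*} [CommRing R]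

theorem coeff_eq_of_X_pow_dvd_sub {f g : R⟦X⟧} {n : ℕ} (h : X ^ (n + 1) ∣ f - g) :
    coeff n f = coeff n g := by
  rw [← sub_eq_zero, ← map_sub]
  exact X_pow_dvd_iff.1 h n n.lt_succ_self

theorem coeff_pow_eq_of_X_pow_dvd_sub {f g : R⟦X⟧} {n : ℕ} (h : X ^ (n + 1) ∣ f - g) (k : ℕ) :
    coeff n (f ^ k) = coeff n (g ^ k) :=
  coeff_eq_of_X_pow_dvd_sub (h.trans (sub_dvd_pow_sub_pow f g k))

theorem coeff_eq_sum_coeff_pow_of_mul_one_sub_eq_one {f u : R⟦X⟧} (hu : constantCoeff u = 0)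
    (hf : f * (1 - u) = 1) (n : ℕ) : coeff n f = ∑ k ∈ range (n + 1), coeff n (u ^ k) := by
  have hgeom : f = ∑ k ∈ range (n + 1), u ^ k + f * u ^ (n + 1) := by
    linear_combination (∑ k ∈ range (n + 1), u ^ k) * hf - f * mul_neg_geom_sum u (n + 1)
  have htail : X ^ (n + 1) ∣ f * u ^ (n + 1) :=
    (pow_dvd_pow_of_dvd (X_dvd_iff.2 hu) _).mul_left f
  conv_lhs => rw [hgeom]
  rw [map_add, map_sum, X_pow_dvd_iff.1 htail n n.lt_succ_self, add_zero]

theorem coeff_pow_sum_C_mul_X_pow {ι : Type*} [DecidableEq ι] (s : Finset ι) (a : ι → R)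
    (e : ι → ℕ) (k n : ℕ) :
    coeff n ((∑ i ∈ s, C (a i) * X ^ e i) ^ k) =
      ∑ t ∈ piAntidiag s k with ∑ i ∈ s, e i * t i = n,
        (Nat.multinomial s t : R) * ∏ i ∈ s, a i ^ t i := by
  rw [sum_pow_eq_sum_piAntidiag, map_sum, sum_filter]
  refine sum_congr rfl fun t _ => ?_
  have hmonomial : ∏ i ∈ s, (C (a i) * X ^ e i) ^ t i =
      C (∏ i ∈ s, a i ^ t i) * X ^ ∑ i ∈ s, e i * t i := by
    simp_rw [mul_pow, ← map_pow, ← pow_mul]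
    rw [prod_mul_distrib, ← map_prod, prod_pow_eq_pow_sum]
  rw [hmonomial, ← map_natCast C, ← mul_assoc, ← map_mul, coeff_C_mul_X_pow]
  simp only [eq_comm (a := n)]

end PowerSeries

theorem Nat.cast_multinomial_eq_div {K ι : Type*} [Field K] [CharZero K] (s : Finset ι)
    (t : ι → ℕ) : (Nat.multinomial s t : K) = (∑ i ∈ s, t i)! / ∏ i ∈ s, ((t i)! : K) := by
  rw [eq_div_iff (prod_ne_zero_iff.2 fun i _ => by exact_mod_cast (t i).factorial_ne_zero),
    mul_comm]
  exact_mod_cast Nat.multinomial_spec s t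

lemma bernoulliPowerSeries_mul_mk_inv_factorial_succ :
    bernoulliPowerSeries ℚ * PowerSeries.mk (fun i => 1 / ((i + 1)! : ℚ)) = 1 := by
  have hX : (X : ℚ⟦X⟧) * PowerSeries.mk (fun i => 1 / ((i + 1)! : ℚ)) = exp ℚ - 1 := by
    ext (_ | m) <;> simp [coeff_exp, coeff_succ_X_mul]
  apply mul_left_cancel₀ (X_ne_zero (R := ℚ))
  rw [mul_one, mul_left_comm, hX, bernoulliPowerSeries_mul_exp_sub_one]

lemma X_pow_dvd_one_sub_mk_inv_factorial_succ_sub (n : ℕ) :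
    X ^ (n + 1) ∣ (1 - PowerSeries.mk (fun i => 1 / ((i + 1)! : ℚ))) -
      ∑ j : Fin n, C (-(1 / ((j + 2 : ℕ)! : ℚ))) * X ^ ((j : ℕ) + 1) := by
  refine X_pow_dvd_iff.2 fun m hm => ?_
  rcases m with _ | m
  · simp
  · rw [map_sub, map_sub, coeff_one, if_neg m.succ_ne_zero, coeff_mk, map_sum]
    simp only [coeff_C_mul_X_pow, Nat.add_right_cancel_iff]
    rw [Fin.sum_univ_eq_sum_range (fun j => if m = j then -(1 / ((j + 2)! : ℚ)) else 0),
      sum_ite_eq, if_pos (mem_range.2 (by omega))]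
    ring

lemma sum_le_sum_succ_mul {n : ℕ} (t : Fin n → ℕ) :
    ∑ j, t j ≤ ∑ j : Fin n, ((j : ℕ) + 1) * t j :=
  sum_le_sum fun j _ => Nat.le_mul_of_pos_left _ j.succ_pos

lemma sum_piAntidiag_eq_sum_fin {M : Type*} [AddCommMonoid M] (n k : ℕ) (g : (Fin n → ℕ) → M) :
    ∑ t ∈ piAntidiag univ k with ∑ j : Fin n, ((j : ℕ) + 1) * t j = n, g t =
      ∑ s : Fin n → Fin (n + 1) with
        ∑ j : Fin n, ((j : ℕ) + 1) * (s j : ℕ) = n ∧ ∑ j, (s j : ℕ) = k, g (fun j => s j) := by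
  symm
  refine sum_bij (fun s _ j => s j) (fun s hs => ?_) (fun s _ s' _ h => ?_) (fun t ht => ?_)
    (fun _ _ => rfl)
  · simp only [mem_filter, mem_univ, true_and] at hs
    simp [mem_piAntidiag, hs]
  · exact funext fun j => Fin.ext (congrFun h j)
  · simp only [mem_filter, mem_piAntidiag] at ht
    have hle : ∀ j, t j < n + 1 := fun j =>
      Nat.lt_succ_of_le (((single_le_sum (fun j _ => Nat.zero_le _) (mem_univ j)).trans
        (sum_le_sum_succ_mul t)).trans ht.2.le)
    exact ⟨fun j => ⟨t j, hle j⟩, by simp [ht.1.1, ht.2], rfl⟩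

lemma sum_range_sum_piAntidiag_eq_sum_fin {M : Type*} [AddCommMonoid M] (n : ℕ)
    (g : (Fin n → ℕ) → M) :
    ∑ k ∈ range (n + 1), ∑ t ∈ piAntidiag univ k with ∑ j : Fin n, ((j : ℕ) + 1) * t j = n, g t =
      ∑ s : Fin n → Fin (n + 1) with ∑ j : Fin n, ((j : ℕ) + 1) * (s j : ℕ) = n,
        g (fun j => s j) := by
  rw [← sum_fiberwise_of_maps_to (g := fun s : Fin n → Fin (n + 1) => ∑ j, (s j : ℕ))
    (t := range (n + 1)) fun s hs => ?_]
  · simp only [filter_filter, sum_piAntidiag_eq_sum_fin]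
  · rw [mem_filter] at hs
    exact mem_range.2 (Nat.lt_succ_of_le ((sum_le_sum_succ_mul _).trans hs.2.le))

lemma multinomial_mul_prod_neg_pow {K ι : Type*} [Field K] [CharZero K] (s : Finset ι)
    (t : ι → ℕ) (b : ι → K) :
    (Nat.multinomial s t : K) * ∏ i ∈ s, (-b i) ^ t i =
      ((∑ i ∈ s, t i)! / ∏ i ∈ s, ((t i)! : K)) * (-1) ^ (∑ i ∈ s, t i) * ∏ i ∈ s, b i ^ t i := by
  rw [prod_congr rfl fun i _ => neg_pow (b i) (t i), Nat.cast_multinomial_eq_div,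
    prod_mul_distrib, prod_pow_eq_pow_sum, mul_assoc]

theorem stmt17_general (n : ℕ) :
    bernoulli n = (n.factorial : ℚ) *
      ∑ t ∈ Finset.univ.filter (fun t : Fin n → Fin (n + 1) =>
          ∑ j : Fin n, ((j : ℕ) + 1) * (t j : ℕ) = n),
        ((∑ j : Fin n, (t j : ℕ)).factorial : ℚ) / (∏ j : Fin n, ((t j : ℕ).factorial : ℚ)) *
          (-1 : ℚ) ^ (∑ j : Fin n, (t j : ℕ)) *
          ∏ j : Fin n, ((1 : ℚ) / (((j : ℕ) + 2).factorial : ℚ)) ^ (t j : ℕ) := by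
  have hB := coeff_eq_sum_coeff_pow_of_mul_one_sub_eq_one
    (u := 1 - PowerSeries.mk fun i => 1 / ((i + 1)! : ℚ)) (by simp)
    (by rw [sub_sub_cancel]; exact bernoulliPowerSeries_mul_mk_inv_factorial_succ) n
  simp only [coeff_pow_eq_of_X_pow_dvd_sub (X_pow_dvd_one_sub_mk_inv_factorial_succ_sub n),
    coeff_pow_sum_C_mul_X_pow, multinomial_mul_prod_neg_pow,
    sum_range_sum_piAntidiag_eq_sum_fin] at hB
  rw [← hB, bernoulliPowerSeries, coeff_mk, Algebra.algebraMap_self, RingHom.id_apply,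
    mul_div_cancel₀ _ (by positivity)]

/-- Trudi-type expression for the classical Bernoulli number `B_n`.  An n-tuple
`(t₁,…,t_n)` with `t₁ + 2t₂ + ⋯ + n·t_n = n` is encoded as
`t : Fin n → Fin (n+1)` (each `t_j ≤ n` automatically since `j·t_j ≤ n`),
with `t j` the multiplicity of `j+1`; the base `1/(j+1)!` (1-indexed) becomes
`1/((j+2)!)` for the 0-indexed `j : Fin n`. -/
theorem stmt17 (n : ℕ) (hn : 1 ≤ n) :
    bernoulli n = (n.factorial : ℚ) *
      ∑ t ∈ Finset.univ.filter (fun t : Fin n → Fin (n + 1) =>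
          ∑ j : Fin n, ((j : ℕ) + 1) * (t j : ℕ) = n),
        ((∑ j : Fin n, (t j : ℕ)).factorial : ℚ) / (∏ j : Fin n, ((t j : ℕ).factorial : ℚ)) *
          (-1 : ℚ) ^ (∑ j : Fin n, (t j : ℕ)) *
          ∏ j : Fin n, ((1 : ℚ) / (((j : ℕ) + 2).factorial : ℚ)) ^ (t j : ℕ) :=
  stmt17_general n
end

section
/- Let N ≥ 1 be an integer and define polynomials P_n(x), Q_n(x) ∈ ℚ[x] by P_0 = 1, P_1 = (N+1) − x, Q_0 = 1, Q_1 = N+1, and for n ≥ 2, P_n = a_n P_{n−1} + b_n P_{n−2} and Q_n = a_n Q_{n−1} + b_n Q_{n−2}, where a_n = N+n, b_{2n} = n·x and b_{2n+1} = −(N+n)·x. Then for every n ≥ 1: P_{2n−1}(x) = ∑_{j=0}^{n} (−1)^j C(n,j) (∏_{l=1}^{2n−j−1} (N+l)) x^j; P_{2n}(x) = ∑_{j=0}^{n} (−1)^j C(n,j) (∏_{l=1}^{2n−j} (N+l)) x^j; Q_{2n−1}(x) = ∑_{j=0}^{n−1} ∑_{k=0}^{j} (−1)^{j−k} (2n−j−1)_k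 C(n−k−1, j−k) (∏_{l=k+1}^{2n−j−1} (N+l)) x^j; and Q_{2n}(x) = ∑_{j=0}^{n} ∑_{k=0}^{j} (−1)^{j−k} (2n−j)_k C(n−k−1, j−k) (∏_{l=k+1}^{2n−j} (N+l)) x^j. Here (a)_k = a(a−1)⋯(a−k+1) is the falling factorial with (a)_0 = 1, C(a,b) is the binomial coefficient with the conventions C(a,b) = 0 for 0 ≤ a < b and C(−1,0) = 1, and empty products equal 1. -/
/-- `a_n = N + n` (as a constant polynomial), the partial denominator of the
continued fraction. -/
noncomputable def aPoly (N n : ℕ) : Polynomial ℚ := Polynomial.C ((N : ℚ) + n)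

/-- `b_n`: for `n = 2m`, `b_{2m} = m·x`; for `n = 2m+1`, `b_{2m+1} = -(N+m)·x`. -/
noncomputable def bPoly (N n : ℕ) : Polynomial ℚ :=
  if n % 2 = 0 then Polynomial.C ((n / 2 : ℕ) : ℚ) * Polynomial.X
  else -(Polynomial.C ((N : ℚ) + (n / 2 : ℕ)) * Polynomial.X)

/-- Numerators of the convergents. -/
noncomputable def P (N : ℕ) : ℕ → Polynomial ℚ
  | 0 => 1
  | 1 => Polynomial.C ((N : ℚ) + 1) - Polynomial.X
  | n + 2 => aPoly N (n + 2) * P N (n + 1) + bPoly N (n + 2) * P N n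

/-- Denominators of the convergents. -/
noncomputable def Q (N : ℕ) : ℕ → Polynomial ℚ
  | 0 => 1
  | 1 => Polynomial.C ((N : ℚ) + 1)
  | n + 2 => aPoly N (n + 2) * Q N (n + 1) + bPoly N (n + 2) * Q N n

open Polynomial Finset

/-- product ∏_{l=a}^{b} (N+l) -/
noncomputable def pr (N a b : ℕ) : ℚ := ∏ l ∈ Finset.Icc a b, ((N : ℚ) + l)

lemma pr_top (N a b : ℕ) (h : a ≤ b + 1) :
    pr N a (b+1) = pr N a b * ((N : ℚ) + (b+1 : ℕ)) := Finset.prod_Icc_succ_top h _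

lemma pr_bot (N a b : ℕ) (h : a ≤ b) :
    pr N a b = ((N : ℚ) + a) * pr N (a+1) b := by
  unfold pr
  rw [Finset.Icc_eq_cons_Ioc h, Finset.prod_cons, ← Finset.Icc_add_one_left_eq_Ioc]

lemma pr_empty (N a b : ℕ) (h : b < a) : pr N a b = 1 := by
  unfold pr
  rw [Finset.Icc_eq_empty (by omega), Finset.prod_empty]

lemma descFactorial_succ_left (m k : ℕ) :
    (m+1).descFactorial k = m.descFactorial k + k * m.descFactorial (k-1) := by
  rcases k with _ | k
  · simp
  · rw [Nat.succ_descFactorial_succ, Nat.descFactorial_succ, Nat.add_sub_cancel]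
    rcases le_or_gt k m with h | h
    · rw [← Nat.add_mul]; congr 1; omega
    · rw [Nat.descFactorial_eq_zero_iff_lt.2 h]; simp

lemma coeff_sumCX (s : ℕ) (c : ℕ → ℚ) (m : ℕ) :
    (∑ j ∈ Finset.range s, Polynomial.C (c j) * Polynomial.X ^ j).coeff m
      = if m < s then c m else 0 := by
  rw [Polynomial.finset_sum_coeff]
  simp only [Polynomial.coeff_C_mul, Polynomial.coeff_X_pow, mul_ite, mul_one, mul_zero]
  rw [Finset.sum_ite_eq]
  simp [Finset.mem_range]

/-- coefficient of x^j in P_{2n} -/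
noncomputable def pec (N n j : ℕ) : ℚ :=
  (-1 : ℚ) ^ j * (n.choose j : ℚ) * ∏ l ∈ Finset.Icc 1 (2 * n - j), ((N : ℚ) + l)

/-- coefficient of x^j in P_{2n-1} -/
noncomputable def poc (N n j : ℕ) : ℚ :=
  (-1 : ℚ) ^ j * (n.choose j : ℚ) * ∏ l ∈ Finset.Icc 1 (2 * n - j - 1), ((N : ℚ) + l)

/-- coefficient of x^j in Q_{2n} -/
noncomputable def qec (N n j : ℕ) : ℚ :=
  ∑ k ∈ Finset.range (j + 1),
    (-1 : ℚ) ^ (j - k) * ((2 * n - j).descFactorial k : ℚ) *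
      ((n - k - 1).choose (j - k) : ℚ) *
      ∏ l ∈ Finset.Icc (k + 1) (2 * n - j), ((N : ℚ) + l)

/-- coefficient of x^j in Q_{2n-1} -/
noncomputable def qoc (N n j : ℕ) : ℚ :=
  ∑ k ∈ Finset.range (j + 1),
    (-1 : ℚ) ^ (j - k) * ((2 * n - j - 1).descFactorial k : ℚ) *
      ((n - k - 1).choose (j - k) : ℚ) *
      ∏ l ∈ Finset.Icc (k + 1) (2 * n - j - 1), ((N : ℚ) + l)

noncomputable def peP (N n : ℕ) : Polynomial ℚ :=
  ∑ j ∈ Finset.range (n+1), Polynomial.C (pec N n j) * Polynomial.X ^ j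
noncomputable def poP (N n : ℕ) : Polynomial ℚ :=
  ∑ j ∈ Finset.range (n+1), Polynomial.C (poc N n j) * Polynomial.X ^ j
noncomputable def qeP (N n : ℕ) : Polynomial ℚ :=
  ∑ j ∈ Finset.range (n+1), Polynomial.C (qec N n j) * Polynomial.X ^ j
noncomputable def qoP (N n : ℕ) : Polynomial ℚ :=
  ∑ j ∈ Finset.range n, Polynomial.C (qoc N n j) * Polynomial.X ^ j

lemma prq (N a b : ℕ) : (∏ l ∈ Finset.Icc a b, ((N : ℚ) + l)) = pr N a b := rfl

lemma pec_top (N n : ℕ) : pec N n (n+1) = 0 := by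
  unfold pec
  rw [Nat.choose_eq_zero_of_lt (by omega)]
  simp

lemma stepP1 (N n i : ℕ) (h : i ≤ n) (hn : 1 ≤ n) :
    poc N (n+1) (i+1)
      = ((N:ℚ) + (2*(n:ℚ)+1)) * pec N n (i+1) - ((N:ℚ) + (n:ℚ)) * poc N n i := by
  unfold poc pec
  rw [prq, prq, prq,
    show 2*(n+1)-(i+1)-1 = (2*n-i-1)+1 by omega,
    show 2*n-(i+1) = 2*n-i-1 by omega,
    pr_top _ _ _ (by omega),
    show ((2*n-i-1)+1 : ℕ) = 2*n-i by omega]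
  have hpas : (((n+1).choose (i+1) : ℕ) : ℚ) = (n.choose i : ℚ) + (n.choose (i+1) : ℚ) := by
    exact_mod_cast Nat.choose_succ_succ' n i
  have hrel : (n.choose (i+1) : ℚ) * ((i:ℚ)+1) = (n.choose i : ℚ) * ((n:ℚ) - (i:ℚ)) := by
    have h2 : ((n.choose (i+1) * (i+1) : ℕ) : ℚ) = ((n.choose i * (n-i) : ℕ) : ℚ) := by
      exact_mod_cast congrArg (Nat.cast (R := ℚ)) (Nat.choose_succ_right_eq n i)
    push_cast [Nat.cast_sub h] at h2
    linear_combination h2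
  have hcast : ((2*n-i : ℕ) : ℚ) = 2*(n:ℚ) - (i:ℚ) := by
    rw [Nat.cast_sub (by omega)]; push_cast; ring
  rw [pow_succ, hcast]
  linear_combination ((-1:ℚ)^i * pr N 1 (2*n-i-1)) * hrel
    - ((-1:ℚ)^i * pr N 1 (2*n-i-1) * ((N:ℚ) + (2*(n:ℚ) - i))) * hpas

lemma stepP2 (N n i : ℕ) (h : i ≤ n) :
    pec N (n+1) (i+1)
      = ((N:ℚ) + (2*(n:ℚ)+2)) * poc N (n+1) (i+1) + ((n:ℚ)+1) * pec N n i := by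
  unfold poc pec
  rw [prq, prq, prq,
    show 2*(n+1)-(i+1)-1 = 2*n-i by omega,
    show 2*(n+1)-(i+1) = (2*n-i)+1 by omega,
    pr_top _ _ _ (by omega)]
  have hrel : (((n+1).choose (i+1) : ℕ) : ℚ) * ((i:ℚ)+1) = ((n:ℚ)+1) * (n.choose i : ℚ) := by
    have h2 : (((n+1) * n.choose i : ℕ) : ℚ) = (((n+1).choose (i+1) * (i+1) : ℕ) : ℚ) := by
      exact_mod_cast congrArg (Nat.cast (R := ℚ)) (Nat.add_one_mul_choose_eq n i)
    push_cast at h2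
    linear_combination -h2
  have hcast : (((2*n-i)+1 : ℕ) : ℚ) = 2*(n:ℚ) - (i:ℚ) + 1 := by
    rw [Nat.cast_add, Nat.cast_sub (by omega)]; push_cast; ring
  rw [pow_succ, hcast]
  linear_combination ((-1:ℚ)^i * pr N 1 (2*n-i)) * hrel

lemma zeroP1 (N n : ℕ) :
    poc N (n+1) 0 = ((N:ℚ) + (2*(n:ℚ)+1)) * pec N n 0 := by
  unfold poc pec
  rw [prq, prq, Nat.sub_zero, Nat.sub_zero,
    show 2*(n+1)-1 = (2*n)+1 by omega, pr_top _ _ _ (by omega)]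
  have : (((2*n)+1 : ℕ) : ℚ) = 2*(n:ℚ)+1 := by push_cast; ring
  rw [this]
  simp only [Nat.choose_zero_right, Nat.cast_one, pow_zero, one_mul]; ring

lemma zeroP2 (N n : ℕ) :
    pec N (n+1) 0 = ((N:ℚ) + (2*(n:ℚ)+2)) * poc N (n+1) 0 := by
  unfold poc pec
  rw [prq, prq,
    show 2*(n+1)-0-1 = 2*n+1 by omega,
    show 2*(n+1)-0 = (2*n+1)+1 by omega, pr_top _ _ _ (by omega)]
  have : (((2*n+1)+1 : ℕ) : ℚ) = 2*(n:ℚ)+2 := by push_cast; ring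
  rw [this]; ring

lemma zeroQ1 (N n : ℕ) :
    qoc N (n+1) 0 = ((N:ℚ) + (2*(n:ℚ)+1)) * qec N n 0 := by
  unfold qoc qec
  rw [Finset.sum_range_one, Finset.sum_range_one, prq, prq]
  simp only [Nat.sub_zero, Nat.descFactorial_zero, Nat.choose_zero_right, pow_zero,
    Nat.cast_one, one_mul, mul_one]
  rw [show 2*(n+1)-1 = (2*n)+1 by omega, pr_top _ _ _ (by omega)]
  have : (((2*n)+1 : ℕ) : ℚ) = 2*(n:ℚ)+1 := by push_cast; ring
  rw [this]; ring

lemma zeroQ2 (N n : ℕ) :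
    qec N (n+1) 0 = ((N:ℚ) + (2*(n:ℚ)+2)) * qoc N (n+1) 0 := by
  unfold qoc qec
  rw [Finset.sum_range_one, Finset.sum_range_one, prq, prq]
  simp only [Nat.sub_zero, Nat.descFactorial_zero, Nat.choose_zero_right, pow_zero,
    Nat.cast_one, one_mul, mul_one]
  rw [show 2*(n+1)-1 = 2*n+1 by omega,
    show 2*(n+1) = (2*n+1)+1 by omega, pr_top _ _ _ (by omega)]
  have : (((2*n+1)+1 : ℕ) : ℚ) = 2*(n:ℚ)+2 := by push_cast; ring
  rw [this]; ring

lemma tele1 (s : ℕ) (f1 f2 f3 E : ℕ → ℚ) (α β : ℚ) (hE0 : E 0 = 0)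
    (key : ∀ k, k < s → f1 k - α * f2 k + β * f3 k = E k - E (k+1))
    (top : f1 s - α * f2 s = E s) :
    ∑ k ∈ Finset.range (s+1), f1 k
      = α * ∑ k ∈ Finset.range (s+1), f2 k - β * ∑ k ∈ Finset.range s, f3 k := by
  have h : ∑ k ∈ Finset.range s, (f1 k - α * f2 k + β * f3 k) = E 0 - E s := by
    rw [Finset.sum_congr rfl (fun k hk => key k (Finset.mem_range.mp hk))]
    exact Finset.sum_range_sub' E s
  rw [Finset.sum_add_distrib, Finset.sum_sub_distrib, ← Finset.mul_sum, ← Finset.mul_sum,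
    hE0] at h
  rw [Finset.sum_range_succ, Finset.sum_range_succ (f := f2)]
  linear_combination h + top

lemma tele2 (s : ℕ) (f1 f2 f3 E : ℕ → ℚ) (α γ : ℚ) (hE0 : E 0 = 0)
    (key : ∀ k, k < s → f1 k - α * f2 k - γ * f3 k = E k - E (k+1))
    (top : f1 s - α * f2 s = E s) :
    ∑ k ∈ Finset.range (s+1), f1 k
      = α * ∑ k ∈ Finset.range (s+1), f2 k + γ * ∑ k ∈ Finset.range s, f3 k := by
  have h : ∑ k ∈ Finset.range s, (f1 k - α * f2 k - γ * f3 k) = E 0 - E s := by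
    rw [Finset.sum_congr rfl (fun k hk => key k (Finset.mem_range.mp hk))]
    exact Finset.sum_range_sub' E s
  rw [Finset.sum_sub_distrib, Finset.sum_sub_distrib, ← Finset.mul_sum, ← Finset.mul_sum,
    hE0] at h
  rw [Finset.sum_range_succ, Finset.sum_range_succ (f := f2)]
  linear_combination h + top

noncomputable def E1 (N n i k : ℕ) : ℚ :=
  (-1:ℚ)^(i+1-k) * (k:ℚ) * ((2*n-i-1).descFactorial (k-1) : ℚ) *
    ((n-k).choose (i+1-k) : ℚ) * ((N:ℚ)+(k:ℚ)) * pr N (k+1) (2*n-i-1)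

noncomputable def E2 (N n i k : ℕ) : ℚ :=
  (-1:ℚ)^(i+1-k) * (k:ℚ) * ((2*n-i).descFactorial (k-1) : ℚ) *
    ((n-k).choose (i+1-k) : ℚ) * ((N:ℚ)+(k:ℚ)) * pr N (k+1) (2*n-i)

lemma stepQ1 (N n i : ℕ) (hi : i + 1 ≤ n) :
    qoc N (n+1) (i+1)
      = ((N:ℚ) + (2*(n:ℚ)+1)) * qec N n (i+1) - ((N:ℚ) + (n:ℚ)) * qoc N n i := by
  unfold qoc qec
  simp only [prq]
  simp only [show 2*(n+1)-(i+1)-1 = 2*n-i from by omega,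
    show 2*n-(i+1) = 2*n-i-1 from by omega,
    show ∀ k, n+1-k-1 = n-k from fun k => by omega]
  refine tele1 (i+1) _ _ _ (E1 N n i) _ _ ?_ ?_ ?_
  · unfold E1; norm_num
  · intro k hk
    simp only [E1]
    obtain ⟨e, rfl⟩ : ∃ e, i = k + e := ⟨i - k, by omega⟩
    obtain ⟨d, rfl⟩ : ∃ d, n = k + e + 1 + d := ⟨n - (k+e+1), by omega⟩
    simp only [show 2*(k+e+1+d)-(k+e)-1 = k+e+2*d+1 from by omega,
      show 2*(k+e+1+d)-(k+e) = (k+e+2*d+1)+1 from by omega,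
      show k+e+1-k = e+1 from by omega,
      show k+e+1-(k+1) = e from by omega,
      show k+e-k = e from by omega,
      show k+e+1+d-k-1 = e+d from by omega,
      show k+e+1+d-k = e+d+1 from by omega,
      show k+e+1+d-(k+1) = e+d from by omega,
      Nat.add_sub_cancel]
    have hdf : (((k+e+2*d+1)+1).descFactorial k : ℚ)
        = ((k+e+2*d+1).descFactorial k : ℚ) + (k:ℚ) * ((k+e+2*d+1).descFactorial (k-1) : ℚ) := by
      exact_mod_cast congrArg (Nat.cast (R := ℚ)) (descFactorial_succ_left (k+e+2*d+1) k)
    have hpas : ((e+d+1).choose (e+1) : ℚ) = ((e+d).choose e : ℚ) + ((e+d).choose (e+1) : ℚ) := by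
      exact_mod_cast Nat.choose_succ_succ' (e+d) e
    have hr : ((e+d).choose (e+1) : ℚ) * ((e:ℚ)+1) = ((e+d).choose e : ℚ) * (d:ℚ) := by
      have h6 := Nat.choose_succ_right_eq (e+d) e
      rw [Nat.add_sub_cancel_left] at h6
      exact_mod_cast congrArg (Nat.cast (R := ℚ)) h6
    have hkf : (k:ℚ) * ((k+e+2*d+1).descFactorial k : ℚ)
        = (k:ℚ) * ((e:ℚ)+2*(d:ℚ)+2) * ((k+e+2*d+1).descFactorial (k-1) : ℚ) := by
      rcases k with _ | k'
      · simp
      · have h5 : (k'+1+e+2*d+1).descFactorial (k'+1)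
            = (e+2*d+2) * (k'+1+e+2*d+1).descFactorial k' := by
          rw [Nat.descFactorial_succ, show k'+1+e+2*d+1-k' = e+2*d+2 from by omega]
        rw [Nat.add_sub_cancel, h5]
        push_cast; ring
    have hp1 : pr N (k+1) ((k+e+2*d+1)+1)
        = pr N (k+1) (k+e+2*d+1) * ((N:ℚ) + ((k:ℚ)+(e:ℚ)+2*(d:ℚ)+2)) := by
      rw [pr_top _ _ _ (by omega)]
      have : ((k+e+2*d+1+1 : ℕ) : ℚ) = (k:ℚ)+(e:ℚ)+2*(d:ℚ)+2 := by push_cast; ring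
      rw [this]
    have hp2 : pr N (k+1) (k+e+2*d+1) = ((N:ℚ)+((k:ℚ)+1)) * pr N (k+1+1) (k+e+2*d+1) := by
      rw [pr_bot _ _ _ (by omega)]
      push_cast; ring
    rw [pow_succ, hdf, hpas, hp1, hp2]
    push_cast
    linear_combination
      ((-1:ℚ)^e * pr N (k+1+1) (k+e+2*d+1) * ((N:ℚ)+(k:ℚ)+1)
        * ((k+e+2*d+1).descFactorial k : ℚ)) * hr
      + ((-1:ℚ)^e * pr N (k+1+1) (k+e+2*d+1) * ((N:ℚ)+(k:ℚ)+1)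
        * (((e+d).choose (e+1) : ℚ) + ((e+d).choose e : ℚ))) * hkf
  · simp only [E1]
    obtain ⟨d, rfl⟩ : ∃ d, n = i+1+d := ⟨n - (i+1), by omega⟩
    simp only [show 2*(i+1+d)-i-1 = i+2*d+1 from by omega,
      show 2*(i+1+d)-i = (i+2*d+1)+1 from by omega,
      Nat.sub_self, Nat.add_sub_cancel,
      show i+1+d-(i+1) = d from by omega,
      show i+1+d-(i+1)-1 = d-1 from by omega,
      pow_zero, Nat.choose_zero_right, Nat.cast_one]
    rw [Nat.succ_descFactorial_succ, Nat.descFactorial_succ,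
      show i+2*d+1-i = 2*d+1 from by omega,
      pr_top _ _ _ (by omega)]
    push_cast; ring

lemma stepQ2 (N n i : ℕ) (hi : i + 1 ≤ n) :
    qec N (n+1) (i+1)
      = ((N:ℚ) + (2*(n:ℚ)+2)) * qoc N (n+1) (i+1) + ((n:ℚ)+1) * qec N n i := by
  unfold qoc qec
  simp only [prq]
  simp only [show 2*(n+1)-(i+1)-1 = 2*n-i from by omega,
    show 2*(n+1)-(i+1) = (2*n-i)+1 from by omega,
    show ∀ k, n+1-k-1 = n-k from fun k => by omega,
    Nat.add_sub_cancel]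
  refine tele2 (i+1) _ _ _ (E2 N n i) _ _ ?_ ?_ ?_
  · unfold E2; norm_num
  · intro k hk
    simp only [E2]
    obtain ⟨e, rfl⟩ : ∃ e, i = k + e := ⟨i - k, by omega⟩
    obtain ⟨d, rfl⟩ : ∃ d, n = k + e + 1 + d := ⟨n - (k+e+1), by omega⟩
    simp only [show 2*(k+e+1+d)-(k+e) = k+e+2*d+2 from by omega,
      show k+e+1-k = e+1 from by omega,
      show k+e+1-(k+1) = e from by omega,
      show k+e-k = e from by omega,
      show k+e+1+d-k-1 = e+d from by omega,
      show k+e+1+d-k = e+d+1 from by omega,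
      show k+e+1+d-(k+1) = e+d from by omega,
      Nat.add_sub_cancel]
    have hdf : (((k+e+2*d+2)+1).descFactorial k : ℚ)
        = ((k+e+2*d+2).descFactorial k : ℚ) + (k:ℚ) * ((k+e+2*d+2).descFactorial (k-1) : ℚ) := by
      exact_mod_cast congrArg (Nat.cast (R := ℚ)) (descFactorial_succ_left (k+e+2*d+2) k)
    have hpas : ((e+d+1).choose (e+1) : ℚ) = ((e+d).choose e : ℚ) + ((e+d).choose (e+1) : ℚ) := by
      exact_mod_cast Nat.choose_succ_succ' (e+d) e
    have hr : ((e+d).choose (e+1) : ℚ) * ((e:ℚ)+1) = ((e+d).choose e : ℚ) * (d:ℚ) := by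
      have h6 := Nat.choose_succ_right_eq (e+d) e
      rw [Nat.add_sub_cancel_left] at h6
      exact_mod_cast congrArg (Nat.cast (R := ℚ)) h6
    have hkf : (k:ℚ) * ((k+e+2*d+2).descFactorial k : ℚ)
        = (k:ℚ) * ((e:ℚ)+2*(d:ℚ)+3) * ((k+e+2*d+2).descFactorial (k-1) : ℚ) := by
      rcases k with _ | k'
      · simp
      · have h5 : (k'+1+e+2*d+2).descFactorial (k'+1)
            = (e+2*d+3) * (k'+1+e+2*d+2).descFactorial k' := by
          rw [Nat.descFactorial_succ, show k'+1+e+2*d+2-k' = e+2*d+3 from by omega]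
        rw [Nat.add_sub_cancel, h5]
        push_cast; ring
    have hp1 : pr N (k+1) ((k+e+2*d+2)+1)
        = pr N (k+1) (k+e+2*d+2) * ((N:ℚ) + ((k:ℚ)+(e:ℚ)+2*(d:ℚ)+3)) := by
      rw [pr_top _ _ _ (by omega)]
      have : ((k+e+2*d+2+1 : ℕ) : ℚ) = (k:ℚ)+(e:ℚ)+2*(d:ℚ)+3 := by push_cast; ring
      rw [this]
    have hp2 : pr N (k+1) (k+e+2*d+2) = ((N:ℚ)+((k:ℚ)+1)) * pr N (k+1+1) (k+e+2*d+2) := by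
      rw [pr_bot _ _ _ (by omega)]
      push_cast; ring
    rw [pow_succ, hdf, hpas, hp1, hp2]
    push_cast
    linear_combination
      ((-1:ℚ)^e * pr N (k+1+1) (k+e+2*d+2) * ((N:ℚ)+(k:ℚ)+1)
        * ((k+e+2*d+2).descFactorial k : ℚ)) * hr
      + ((-1:ℚ)^e * pr N (k+1+1) (k+e+2*d+2) * ((N:ℚ)+(k:ℚ)+1)
        * (((e+d).choose (e+1) : ℚ) + ((e+d).choose e : ℚ))) * hkf
  · simp only [E2]
    obtain ⟨d, rfl⟩ : ∃ d, n = i+1+d := ⟨n - (i+1), by omega⟩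
    simp only [show 2*(i+1+d)-i = i+2*d+2 from by omega,
      Nat.sub_self, Nat.add_sub_cancel,
      show i+1+d-(i+1) = d from by omega,
      show i+1+d-(i+1)-1 = d-1 from by omega,
      pow_zero, Nat.choose_zero_right, Nat.cast_one]
    rw [Nat.succ_descFactorial_succ, Nat.descFactorial_succ,
      show i+2*d+2-i = 2*d+2 from by omega,
      pr_top _ _ _ (by omega)]
    push_cast; ring

lemma qec_diag (N n : ℕ) : qec N n n = (n.descFactorial n : ℚ) := by
  unfold qec
  simp only [prq, show 2*n-n = n from by omega]
  rw [Finset.sum_eq_single_of_mem n (Finset.self_mem_range_succ n)]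
  · rw [Nat.sub_self, pow_zero, Nat.choose_zero_right, pr_empty _ _ _ (by omega)]
    norm_num
  · intro k hk hkn
    have hk2 : k < n := by
      have := Finset.mem_range.mp hk; omega
    rw [Nat.choose_eq_zero_of_lt (by omega : n-k-1 < n-k)]
    norm_num

lemma stepQ2top (N n : ℕ) : qec N (n+1) (n+1) = ((n:ℚ)+1) * qec N n n := by
  rw [qec_diag, qec_diag, Nat.succ_descFactorial_succ]
  push_cast; ring

lemma polyP1 (N n : ℕ) (hn : 1 ≤ n) :
    poP N (n+1) = Polynomial.C ((N:ℚ)+(2*(n:ℚ)+1)) * peP N n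
      - Polynomial.C ((N:ℚ)+(n:ℚ)) * (Polynomial.X * poP N n) := by
  ext m
  rw [Polynomial.coeff_sub, Polynomial.coeff_C_mul, Polynomial.coeff_C_mul]
  unfold poP peP
  rw [coeff_sumCX, coeff_sumCX]
  rcases m with _ | m
  · rw [if_pos (by omega), if_pos (by omega), Polynomial.mul_coeff_zero,
      Polynomial.coeff_X_zero, zero_mul, mul_zero, sub_zero]
    exact zeroP1 N n
  · rw [Polynomial.coeff_X_mul, coeff_sumCX]
    rcases Nat.lt_or_ge m (n+1) with h | h
    · rw [if_pos (by omega), if_pos h]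
      have hpe : (if m+1 < n+1 then pec N n (m+1) else 0) = pec N n (m+1) := by
        rcases Nat.lt_or_ge (m+1) (n+1) with h2 | h2
        · exact if_pos h2
        · rw [if_neg (by omega), show m+1 = n+1 from by omega, pec_top]
      rw [hpe]
      exact stepP1 N n m (by omega) hn
    · rw [if_neg (by omega), if_neg (by omega), if_neg (by omega)]
      ring

lemma polyP2 (N n : ℕ) :
    peP N (n+1) = Polynomial.C ((N:ℚ)+(2*(n:ℚ)+2)) * poP N (n+1)
      + Polynomial.C ((n:ℚ)+1) * (Polynomial.X * peP N n) := by
  ext m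
  rw [Polynomial.coeff_add, Polynomial.coeff_C_mul, Polynomial.coeff_C_mul]
  unfold poP peP
  rw [coeff_sumCX, coeff_sumCX]
  rcases m with _ | m
  · rw [if_pos (by omega), if_pos (by omega), Polynomial.mul_coeff_zero,
      Polynomial.coeff_X_zero, zero_mul, mul_zero, add_zero]
    exact zeroP2 N n
  · rw [Polynomial.coeff_X_mul, coeff_sumCX]
    rcases Nat.lt_or_ge m (n+1) with h | h
    · rw [if_pos (by omega), if_pos (by omega), if_pos h]
      exact stepP2 N n m (by omega)
    · rw [if_neg (by omega), if_neg (by omega), if_neg (by omega)]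
      ring

lemma polyQ1 (N n : ℕ) (hn : 1 ≤ n) :
    qoP N (n+1) = Polynomial.C ((N:ℚ)+(2*(n:ℚ)+1)) * qeP N n
      - Polynomial.C ((N:ℚ)+(n:ℚ)) * (Polynomial.X * qoP N n) := by
  ext m
  rw [Polynomial.coeff_sub, Polynomial.coeff_C_mul, Polynomial.coeff_C_mul]
  unfold qoP qeP
  rw [coeff_sumCX, coeff_sumCX]
  rcases m with _ | m
  · rw [if_pos (by omega), if_pos (by omega), Polynomial.mul_coeff_zero,
      Polynomial.coeff_X_zero, zero_mul, mul_zero, sub_zero]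
    exact zeroQ1 N n
  · rw [Polynomial.coeff_X_mul, coeff_sumCX]
    rcases Nat.lt_or_ge (m+1) (n+1) with h | h
    · rw [if_pos h, if_pos h, if_pos (by omega)]
      exact stepQ1 N n m (by omega)
    · rw [if_neg (by omega), if_neg (by omega), if_neg (by omega)]
      ring

lemma polyQ2 (N n : ℕ) (hn : 1 ≤ n) :
    qeP N (n+1) = Polynomial.C ((N:ℚ)+(2*(n:ℚ)+2)) * qoP N (n+1)
      + Polynomial.C ((n:ℚ)+1) * (Polynomial.X * qeP N n) := by
  ext m
  rw [Polynomial.coeff_add, Polynomial.coeff_C_mul, Polynomial.coeff_C_mul]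
  unfold qoP qeP
  rw [coeff_sumCX, coeff_sumCX]
  rcases m with _ | m
  · rw [if_pos (by omega), if_pos (by omega), Polynomial.mul_coeff_zero,
      Polynomial.coeff_X_zero, zero_mul, mul_zero, add_zero]
    exact zeroQ2 N n
  · rw [Polynomial.coeff_X_mul, coeff_sumCX]
    rcases Nat.lt_or_ge (m+1) (n+1) with h | h
    · rw [if_pos (by omega), if_pos h, if_pos (by omega)]
      exact stepQ2 N n m (by omega)
    · rcases Nat.lt_or_ge (m+1) (n+2) with h2 | h2
      · rw [if_pos h2, if_neg (by omega), if_pos (by omega),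
          show m+1 = n+1 from by omega, show m = n from by omega]
        rw [mul_zero, zero_add]
        exact stepQ2top N n
      · rw [if_neg (by omega), if_neg (by omega), if_neg (by omega)]
        ring

lemma main (N m : ℕ) :
    P N (2*m+1) = poP N (m+1) ∧ P N (2*m+2) = peP N (m+1)
      ∧ Q N (2*m+1) = qoP N (m+1) ∧ Q N (2*m+2) = qeP N (m+1) := by
  induction m with
  | zero =>
    refine ⟨?_, ?_, ?_, ?_⟩
    · show P N 1 = _
      unfold poP poc P
      norm_num [Finset.sum_range_succ, Finset.Icc_self, Finset.prod_singleton]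
      ring
    · show P N 2 = _
      show aPoly N 2 * P N 1 + bPoly N 2 * P N 0 = _
      unfold peP pec P aPoly bPoly
      norm_num [Finset.sum_range_succ, Finset.Icc_self, Finset.prod_singleton,
        show Finset.Icc 1 2 = {1, 2} from rfl, Finset.prod_insert, map_mul, map_ofNat]
      ring
    · show Q N 1 = _
      unfold qoP qoc Q
      norm_num [Finset.sum_range_succ, Finset.Icc_self, Finset.prod_singleton]
    · show Q N 2 = _
      show aPoly N 2 * Q N 1 + bPoly N 2 * Q N 0 = _
      unfold qeP qec Q aPoly bPoly
      norm_num [Finset.sum_range_succ, Finset.Icc_self, Finset.prod_singleton,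
        show Finset.Icc 1 2 = {1, 2} from rfl, Finset.prod_insert, map_mul, map_ofNat,
        show (2:ℕ)-1-1 = 0 from rfl, show Nat.descFactorial 1 1 = 1 from rfl,
        Finset.Icc_eq_empty_of_lt]
      ring
  | succ m ih =>
    obtain ⟨h1, h2, h3, h4⟩ := ih
    have ha1 : aPoly N (2*m+1+2) = Polynomial.C ((N:ℚ)+(2*((m+1 : ℕ):ℚ)+1)) := by
      unfold aPoly; congr 1; push_cast; ring
    have ha2 : aPoly N (2*m+2+2) = Polynomial.C ((N:ℚ)+(2*((m+1 : ℕ):ℚ)+2)) := by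
      unfold aPoly; congr 1; push_cast; ring
    have hb1 : bPoly N (2*m+1+2) = -(Polynomial.C ((N:ℚ)+((m+1 : ℕ):ℚ)) * Polynomial.X) := by
      unfold bPoly
      rw [if_neg (by omega), show (2*m+1+2)/2 = m+1 from by omega]
    have hb2 : bPoly N (2*m+2+2) = Polynomial.C (((m+1 : ℕ):ℚ)+1) * Polynomial.X := by
      unfold bPoly
      rw [if_pos (by omega), show (2*m+2+2)/2 = m+1+1 from by omega]
      congr 2
      push_cast; ring
    have g1 : P N (2*(m+1)+1) = poP N (m+1+1) := by
      rw [show 2*(m+1)+1 = 2*m+1+2 from by omega, P,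
        show 2*m+1+1 = 2*m+2 from by omega, h1, h2, ha1, hb1]
      linear_combination -polyP1 N (m+1) (by omega)
    have g2 : P N (2*(m+1)+2) = peP N (m+1+1) := by
      rw [show 2*(m+1)+2 = 2*m+2+2 from by omega, P,
        show 2*m+2+1 = 2*(m+1)+1 from by omega, g1, h2, ha2, hb2]
      linear_combination -polyP2 N (m+1)
    have g3 : Q N (2*(m+1)+1) = qoP N (m+1+1) := by
      rw [show 2*(m+1)+1 = 2*m+1+2 from by omega, Q,
        show 2*m+1+1 = 2*m+2 from by omega, h3, h4, ha1, hb1]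
      linear_combination -polyQ1 N (m+1) (by omega)
    have g4 : Q N (2*(m+1)+2) = qeP N (m+1+1) := by
      rw [show 2*(m+1)+2 = 2*m+2+2 from by omega, Q,
        show 2*m+2+1 = 2*(m+1)+1 from by omega, g3, h4, ha2, hb2]
      linear_combination -polyQ2 N (m+1) (by omega)
    exact ⟨g1, g2, g3, g4⟩

/-- Explicit forms of the convergents.  Binomial coefficients are `Nat.choose`
(note `Nat.choose` with natural subtraction realizes the conventions
`C(a,b) = 0` for `0 ≤ a < b` and `C(-1,0) = 1`, since `n-k-1` can only be
"negative" when `k = j = n`, where `j - k = 0`), `(a)_k` is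
`Nat.descFactorial a k`, and empty products equal 1. -/
theorem stmt18 (N : ℕ) (hN : 1 ≤ N) (n : ℕ) (hn : 1 ≤ n) :
    P N (2 * n - 1) = ∑ j ∈ Finset.range (n + 1),
        Polynomial.C ((-1 : ℚ) ^ j * (n.choose j : ℚ) *
          ∏ l ∈ Finset.Icc 1 (2 * n - j - 1), ((N : ℚ) + l)) * Polynomial.X ^ j
  ∧ P N (2 * n) = ∑ j ∈ Finset.range (n + 1),
        Polynomial.C ((-1 : ℚ) ^ j * (n.choose j : ℚ) *
          ∏ l ∈ Finset.Icc 1 (2 * n - j), ((N : ℚ) + l)) * Polynomial.X ^ j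
  ∧ Q N (2 * n - 1) = ∑ j ∈ Finset.range n,
        Polynomial.C (∑ k ∈ Finset.range (j + 1),
          (-1 : ℚ) ^ (j - k) * ((2 * n - j - 1).descFactorial k : ℚ) *
            ((n - k - 1).choose (j - k) : ℚ) *
            ∏ l ∈ Finset.Icc (k + 1) (2 * n - j - 1), ((N : ℚ) + l)) * Polynomial.X ^ j
  ∧ Q N (2 * n) = ∑ j ∈ Finset.range (n + 1),
        Polynomial.C (∑ k ∈ Finset.range (j + 1),
          (-1 : ℚ) ^ (j - k) * ((2 * n - j).descFactorial k : ℚ) *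
            ((n - k - 1).choose (j - k) : ℚ) *
            ∏ l ∈ Finset.Icc (k + 1) (2 * n - j), ((N : ℚ) + l)) * Polynomial.X ^ j := by
  obtain ⟨m, rfl⟩ : ∃ m, n = m + 1 := ⟨n - 1, by omega⟩
  obtain ⟨g1, g2, g3, g4⟩ := main N m
  refine ⟨?_, ?_, ?_, ?_⟩
  · rw [show 2*(m+1)-1 = 2*m+1 from by omega, g1]; rfl
  · rw [show 2*(m+1) = 2*m+2 from by omega, g2]; rfl
  · rw [show 2*(m+1)-1 = 2*m+1 from by omega, g3]; rfl
  · rw [show 2*(m+1) = 2*m+2 from by omega, g4]; rfl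
end
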